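/- Conversely, if Q is a symmetric d×d matrix with Q 1_d = 0 and l ∈ ℝ^d, and the integral ∫_{(0,∞)^d \ (0,1]^d} exp( -½ (log z)ᵀ Q (log z) + lᵀ log z ) ∏ z_i^{-1} dz is finite, then Q restricted to the orthogonal complement of 1_d is positive definite (so Ker Q = span(1_d)) and lᵀ 1_d < 0. -/

import Mathlib

/-!
Substituting `z = exp y` turns the integral into `∫ exp (-½ yᵀ Q y + lᵀ y) dy` over `{y ≰ 0}`.
If `w` has a positive coordinate `w i₀` and either `wᵀ Q w < 0`, or `Q w = 0` and `lᵀ w ≥ 0`,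
then the exponent is bounded below on the tube `{t • w + u | t ≥ 0, u ∈ (0, w i₀]^d}`, which lies
in `{y ≰ 0}` and contains infinitely many disjoint translates of a box, so the integral diverges.
Finiteness therefore gives `lᵀ 1 < 0` (take `w = 1`), `Q ⪰ 0`, and `ker Q ∩ l^⊥ = 0`.
For `v ⊥ 1` with `vᵀ Q v = 0`, semidefiniteness gives `Q v = 0`, and then
`(lᵀ 1) v - (lᵀ v) 1 ∈ ker Q ∩ l^⊥` vanishes, which forces `v = 0`.
-/

open MeasureTheory Matrix Set Real
open scoped Pointwise
open Function (onFun)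

theorem measure_iUnion_vadd_eq_top {G : Type*} [AddGroup G] [MeasurableSpace G]
    [MeasurableAdd G] {μ : Measure G} [μ.IsAddLeftInvariant] {K : Set G}
    (hK : MeasurableSet K) (hK0 : μ K ≠ 0) {v : ℕ → G}
    (hv : Pairwise (onFun Disjoint fun n => v n +ᵥ K)) :
    μ (⋃ n, v n +ᵥ K) = ⊤ := by
  rw [measure_iUnion hv fun n => hK.const_vadd (v n)]
  simp only [measure_vadd]
  exact ENNReal.tsum_const_eq_top_of_ne_zero hK0

theorem Matrix.IsSymm.dotProduct_mulVec_comm {ι R : Type*} [Fintype ι] [CommSemiring R]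
    {Q : Matrix ι ι R} (hQ : Q.IsSymm) (u w : ι → R) :
    u ⬝ᵥ Q *ᵥ w = w ⬝ᵥ Q *ᵥ u := by
  rw [dotProduct_mulVec, ← mulVec_transpose, hQ.eq, dotProduct_comm]

theorem neg_sq_div_two_mul_le_add {a : ℝ} (ha : 0 < a) (b t : ℝ) :
    -(b ^ 2 / (2 * a)) ≤ t ^ 2 / 2 * a + t * b := by
  have : t ^ 2 / 2 * a + t * b + b ^ 2 / (2 * a) = (a * t + b) ^ 2 / (2 * a) := by
    field_simp
    ring
  linarith [div_nonneg (sq_nonneg (a * t + b)) (by positivity : (0 : ℝ) ≤ 2 * a)]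

variable {ι : Type*}

theorem image_exp_pi_setOf_not_forall_nonpos :
    (fun y i => exp (y i)) '' {y : ι → ℝ | ¬ ∀ i, y i ≤ 0} =
      {z | (∀ i, 0 < z i) ∧ ¬ ∀ i, z i ≤ 1} := by
  ext z
  constructor
  · rintro ⟨y, hy, rfl⟩
    simpa [exp_pos, exp_le_one_iff] using hy
  · rintro ⟨hpos, hz⟩
    refine ⟨fun i => log (z i), ?_, funext fun i => exp_log (hpos i)⟩
    simpa [log_pos_iff (hpos _).le] using hz

theorem pairwise_disjoint_natCast_smul_vadd_pi_Ioc {w : ι → ℝ} {i₀ : ι} (hw : 0 < w i₀) :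
    Pairwise (onFun Disjoint fun n : ℕ =>
      ((n : ℝ) • w +ᵥ univ.pi fun _ => Ioc 0 (w i₀) : Set (ι → ℝ))) := by
  intro m n hmn
  refine Set.disjoint_left.2 ?_
  rintro _ ⟨u, hu, rfl⟩ ⟨u', hu', hmn'⟩
  have hi := congrFun hmn' i₀
  obtain ⟨h0, h1⟩ := hu i₀ (mem_univ _)
  obtain ⟨h0', h1'⟩ := hu' i₀ (mem_univ _)
  simp only [vadd_eq_add, Pi.add_apply, Pi.smul_apply, smul_eq_mul] at hi
  have hlt : m < n + 1 := by
    by_contra! hle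
    have : (n : ℝ) + 1 ≤ m := by exact_mod_cast hle
    nlinarith
  have hgt : n < m + 1 := by
    by_contra! hle
    have : (m : ℝ) + 1 ≤ n := by exact_mod_cast hle
    nlinarith
  omega

variable [Fintype ι]

theorem hasFDerivAt_exp_pi (y : ι → ℝ) :
    HasFDerivAt (fun y i => exp (y i))
      (ContinuousLinearMap.pi fun i =>
        (ContinuousLinearMap.smulRight (1 : ℝ →L[ℝ] ℝ) (exp (y i))).comp
          (ContinuousLinearMap.proj i)) y :=
  hasFDerivAt_pi.2 fun i =>
    (hasDerivAt_exp (y i)).hasFDerivAt.comp (g := exp) y (hasFDerivAt_apply i y)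

theorem lintegral_image_exp_pi {s : Set (ι → ℝ)} (hs : MeasurableSet s) (f : (ι → ℝ) → ℝ) :
    ∫⁻ z in (fun y i => exp (y i)) '' s, ENNReal.ofReal (f (fun i => log (z i)) * ∏ i, (z i)⁻¹) =
      ∫⁻ y in s, ENNReal.ofReal (f y) := by
  have hinj : InjOn (fun y i => exp (y i)) s := fun y _ y' _ h =>
    funext fun i => exp_injective (congrFun h i)
  rw [lintegral_image_eq_lintegral_abs_det_fderiv_mul volume hs
    (fun y _ => (hasFDerivAt_exp_pi y).hasFDerivWithinAt) hinj]
  refine setLIntegral_congr_fun hs fun y _ => ?_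
  have hpos : 0 < ∏ i, exp (y i) := Finset.prod_pos fun i _ => exp_pos _
  simp only [ContinuousLinearMap.det_pi, ContinuousLinearMap.det_smulRight, one_apply_eq_self,
    one_mul, log_exp, abs_of_pos hpos]
  rw [← ENNReal.ofReal_mul hpos.le, Finset.prod_inv_distrib]
  field_simp

noncomputable def hrExponent (Q : Matrix ι ι ℝ) (l y : ι → ℝ) : ℝ :=
  -(1 / 2) * (y ⬝ᵥ Q *ᵥ y) + l ⬝ᵥ y

theorem continuous_hrExponent (Q : Matrix ι ι ℝ) (l : ι → ℝ) : Continuous (hrExponent Q l) := by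
  unfold hrExponent
  fun_prop

theorem hrExponent_smul_add {Q : Matrix ι ι ℝ} (hQ : Q.IsSymm) (l : ι → ℝ) (t : ℝ)
    (w u : ι → ℝ) :
    hrExponent Q l (t • w + u) =
      t ^ 2 / 2 * -(w ⬝ᵥ Q *ᵥ w) + t * (l ⬝ᵥ w - w ⬝ᵥ Q *ᵥ u) + hrExponent Q l u := by
  simp only [hrExponent, mulVec_add, mulVec_smul, dotProduct_add, add_dotProduct,
    dotProduct_smul, smul_dotProduct, smul_eq_mul, hQ.dotProduct_mulVec_comm u w]
  ring

theorem exists_le_hrExponent_smul_add {Q : Matrix ι ι ℝ} (hQ : Q.IsSymm) (l : ι → ℝ)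
    {K : Set (ι → ℝ)} (hK : IsCompact K) {w : ι → ℝ}
    (hw : w ⬝ᵥ Q *ᵥ w < 0 ∨ (Q *ᵥ w = 0 ∧ 0 ≤ l ⬝ᵥ w)) :
    ∃ M, ∀ t : ℝ, 0 ≤ t → ∀ u ∈ K, M ≤ hrExponent Q l (t • w + u) := by
  obtain ⟨M₀, hM₀⟩ := hK.bddBelow_image (continuous_hrExponent Q l).continuousOn
  obtain ⟨C, hC⟩ := hK.exists_bound_of_continuousOn
    (f := fun u => l ⬝ᵥ w - w ⬝ᵥ Q *ᵥ u) (by fun_prop)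
  rcases hw with hneg | ⟨hQw, hlw⟩
  · refine ⟨M₀ - C ^ 2 / (2 * -(w ⬝ᵥ Q *ᵥ w)), fun t _ u hu => ?_⟩
    have hb : (l ⬝ᵥ w - w ⬝ᵥ Q *ᵥ u) ^ 2 ≤ C ^ 2 := by
      simpa [sq_abs] using pow_le_pow_left₀ (norm_nonneg _) (hC u hu) 2
    have hquad := neg_sq_div_two_mul_le_add (neg_pos.2 hneg) (l ⬝ᵥ w - w ⬝ᵥ Q *ᵥ u) t
    have := div_le_div_of_nonneg_right hb (by linarith : (0 : ℝ) ≤ 2 * -(w ⬝ᵥ Q *ᵥ w))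
    rw [hrExponent_smul_add hQ]
    linarith [hM₀ (mem_image_of_mem _ hu)]
  · refine ⟨M₀, fun t ht u hu => ?_⟩
    rw [hrExponent_smul_add hQ, hQw, hQ.dotProduct_mulVec_comm w u, hQw]
    simp only [dotProduct_zero, neg_zero, mul_zero, sub_zero, zero_add]
    nlinarith [hM₀ (mem_image_of_mem _ hu)]

theorem lintegral_exp_hrExponent_eq_top {Q : Matrix ι ι ℝ} (hQ : Q.IsSymm) (l : ι → ℝ)
    {w : ι → ℝ} {i₀ : ι} (hw₀ : 0 < w i₀)
    (hw : w ⬝ᵥ Q *ᵥ w < 0 ∨ (Q *ᵥ w = 0 ∧ 0 ≤ l ⬝ᵥ w)) :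
    ∫⁻ y in {y : ι → ℝ | ¬ ∀ i, y i ≤ 0}, ENNReal.ofReal (exp (hrExponent Q l y)) = ⊤ := by
  set B : Set (ι → ℝ) := univ.pi fun _ => Ioc 0 (w i₀)
  set T : Set (ι → ℝ) := ⋃ n : ℕ, (n : ℝ) • w +ᵥ B
  obtain ⟨M, hM⟩ := exists_le_hrExponent_smul_add hQ l
    (isCompact_univ_pi fun _ => isCompact_Icc : IsCompact (univ.pi fun _ => Icc 0 (w i₀))) hw
  have hB : MeasurableSet B := MeasurableSet.univ_pi fun _ => measurableSet_Ioc
  have hT : MeasurableSet T := MeasurableSet.iUnion fun n => hB.const_vadd _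
  have hTvol : volume T = ⊤ := by
    refine measure_iUnion_vadd_eq_top hB ?_ (pairwise_disjoint_natCast_smul_vadd_pi_Ioc hw₀)
    simp [B, volume_pi_pi, Real.volume_Ioc, hw₀]
  have hTs : T ⊆ {y | ¬ ∀ i, y i ≤ 0} := by
    rintro _ ⟨_, ⟨n, rfl⟩, u, hu, rfl⟩ hle
    have := (hu i₀ (mem_univ _)).1
    have := hle i₀
    simp only [vadd_eq_add, Pi.add_apply, Pi.smul_apply, smul_eq_mul] at this
    nlinarith [n.cast_nonneg (α := ℝ)]
  have hTM : ∀ y ∈ T, ENNReal.ofReal (exp M) ≤ ENNReal.ofReal (exp (hrExponent Q l y)) := by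
    rintro _ ⟨_, ⟨n, rfl⟩, u, hu, rfl⟩
    refine ENNReal.ofReal_le_ofReal (exp_le_exp.2 (hM n n.cast_nonneg u ?_))
    exact pi_mono (fun _ _ => Ioc_subset_Icc_self) hu
  refine top_unique ?_
  calc ⊤ = ∫⁻ _ in T, ENNReal.ofReal (exp M) := by
        rw [setLIntegral_const, hTvol, ENNReal.mul_top (by simp [exp_pos])]
    _ ≤ ∫⁻ y in T, ENNReal.ofReal (exp (hrExponent Q l y)) := setLIntegral_mono' hT hTM
    _ ≤ _ := lintegral_mono_set hTs

theorem lintegral_exp_hrExponent_eq_top_of_ne_zero {Q : Matrix ι ι ℝ} (hQ : Q.IsSymm)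
    (l : ι → ℝ) {w : ι → ℝ} (hw₀ : w ≠ 0)
    (hw : w ⬝ᵥ Q *ᵥ w < 0 ∨ (Q *ᵥ w = 0 ∧ l ⬝ᵥ w = 0)) :
    ∫⁻ y in {y : ι → ℝ | ¬ ∀ i, y i ≤ 0}, ENNReal.ofReal (exp (hrExponent Q l y)) = ⊤ := by
  obtain ⟨i, hi⟩ := Function.ne_iff.1 hw₀
  rcases hi.lt_or_gt with hneg | hpos
  · refine lintegral_exp_hrExponent_eq_top hQ l (w := -w) (i₀ := i) (by simpa using hneg) ?_
    simpa only [mulVec_neg, dotProduct_neg, neg_dotProduct, neg_neg, neg_eq_zero,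
      neg_nonneg] using hw.imp_right fun h => ⟨h.1, h.2.le⟩
  · exact lintegral_exp_hrExponent_eq_top hQ l hpos (hw.imp_right fun h => ⟨h.1, h.2.ge⟩)

section FiniteIntegral

variable {Q : Matrix ι ι ℝ} (hQ : Q.IsSymm) {l : ι → ℝ}
  (hfin : ∫⁻ y in {y : ι → ℝ | ¬ ∀ i, y i ≤ 0}, ENNReal.ofReal (exp (hrExponent Q l y)) ≠ ⊤)
include hQ hfin

theorem sum_neg_of_lintegral_exp_hrExponent_ne_top [Nonempty ι] (hQ1 : Q *ᵥ 1 = 0) :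
    ∑ i, l i < 0 := by
  by_contra! hl
  exact hfin (lintegral_exp_hrExponent_eq_top hQ l (w := 1) (i₀ := Classical.arbitrary ι)
    one_pos (Or.inr ⟨hQ1, by rwa [dotProduct_one]⟩))

theorem dotProduct_mulVec_nonneg_of_lintegral_exp_hrExponent_ne_top (w : ι → ℝ) :
    0 ≤ w ⬝ᵥ Q *ᵥ w := by
  by_contra! hw
  refine hfin (lintegral_exp_hrExponent_eq_top_of_ne_zero hQ l ?_ (Or.inl hw))
  rintro rfl
  simp at hw

theorem eq_zero_of_lintegral_exp_hrExponent_ne_top {w : ι → ℝ} (hQw : Q *ᵥ w = 0)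
    (hlw : l ⬝ᵥ w = 0) : w = 0 := by
  by_contra hw
  exact hfin (lintegral_exp_hrExponent_eq_top_of_ne_zero hQ l hw (Or.inr ⟨hQw, hlw⟩))

end FiniteIntegral

theorem dotProduct_mulVec_pos_of_sum_eq_zero {Q : Matrix ι ι ℝ} (hQ : Q.IsSymm)
    (hQ1 : Q *ᵥ 1 = 0) {l : ι → ℝ} (hl : ∑ i, l i ≠ 0) (hpsd : ∀ w, 0 ≤ w ⬝ᵥ Q *ᵥ w)
    (hker : ∀ w, Q *ᵥ w = 0 → l ⬝ᵥ w = 0 → w = 0) {v : ι → ℝ} (hv : v ≠ 0)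
    (hsum : ∑ i, v i = 0) : 0 < v ⬝ᵥ Q *ᵥ v := by
  refine (hpsd v).lt_of_ne fun hv0 => hv ?_
  have hQ' : Q.PosSemidef := .of_dotProduct_mulVec_nonneg (isHermitian_iff_isSymm.2 hQ) hpsd
  have hQv : Q *ᵥ v = 0 := (hQ'.dotProduct_mulVec_zero_iff v).1 (by simpa using hv0.symm)
  have hw : (∑ i, l i) • v - (l ⬝ᵥ v) • 1 = 0 := by
    refine hker _ (by simp [mulVec_sub, mulVec_smul, hQv, hQ1]) ?_
    simp only [dotProduct_sub, dotProduct_smul, dotProduct_one, smul_eq_mul]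
    ring
  have hlv : l ⬝ᵥ v = 0 := by
    obtain ⟨i, -⟩ := Function.ne_iff.1 hv
    have : Nonempty ι := ⟨i⟩
    have h1w := congrArg (1 ⬝ᵥ ·) hw
    rw [dotProduct_sub, dotProduct_smul, dotProduct_smul, one_dotProduct_one, one_dotProduct,
      hsum, dotProduct_zero] at h1w
    simpa using h1w
  simpa [hlv, hl] using hw

theorem hr_pareto_normalizing_constant_finite_converse
    {d : ℕ} (hd : 2 ≤ d)
    (Q : Matrix (Fin d) (Fin d) ℝ) (l : Fin d → ℝ)
    (hsymm : Q.IsSymm) (hker1 : Q.mulVec (fun _ => 1) = 0)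
    (hfin : ∫⁻ z in {z : Fin d → ℝ | (∀ i, 0 < z i) ∧ ¬ ∀ i, z i ≤ 1},
        ENNReal.ofReal
          (Real.exp (-(1 / 2) *
              ((fun i => Real.log (z i)) ⬝ᵥ Q.mulVec fun i => Real.log (z i)) +
              l ⬝ᵥ fun i => Real.log (z i)) *
            ∏ i, (z i)⁻¹) < ⊤) :
    (∀ v : Fin d → ℝ, v ≠ 0 → ∑ i, v i = 0 → 0 < v ⬝ᵥ Q.mulVec v) ∧
      ∑ i, l i < 0 := by
  have hfin' : ∫⁻ y in {y : Fin d → ℝ | ¬ ∀ i, y i ≤ 0},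
      ENNReal.ofReal (exp (hrExponent Q l y)) ≠ ⊤ := by
    have hs : MeasurableSet {y : Fin d → ℝ | ¬ ∀ i, y i ≤ 0} := measurableSet_Iic.compl
    rw [← lintegral_image_exp_pi hs, image_exp_pi_setOf_not_forall_nonpos]
    exact hfin.ne
  have : Nonempty (Fin d) := ⟨⟨0, by omega⟩⟩
  have hl := sum_neg_of_lintegral_exp_hrExponent_ne_top hsymm hfin' hker1
  exact ⟨fun v hv hsum => dotProduct_mulVec_pos_of_sum_eq_zero hsymm hker1 hl.ne
    (dotProduct_mulVec_nonneg_of_lintegral_exp_hrExponent_ne_top hsymm hfin')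
    (fun _ => eq_zero_of_lintegral_exp_hrExponent_ne_top hsymm hfin') hv hsum, hl⟩
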